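/- Let Σ₂ have one sort and countably many unary predicates q₀, q₁, q₂, …, and let T₂ = {∃=1 y (y = y)} ∪ {∀y (q₀(y) → q_i(y)) : i ∈ ℕ}. Then the category Mod(T₂) of models of T₂ with elementary embeddings is discrete and has 2^{ℵ₀} isomorphism classes of objects. -/

import Mathlib

open FirstOrder FirstOrder.Language CategoryTheory

universe u v w

namespace MoritaPaper

/-- The category `Mod(T)` of models of a first-order theory `T`, with elementary
embeddings as morphisms. -/
instance modelCat {L : FirstOrder.Language.{u, v}} (T : L.Theory) :
    Category (Theory.ModelType.{u, v, w} T) where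
  Hom M N := M ↪ₑ[L] N
  id M := ElementaryEmbedding.refl L M
  comp f g := g.comp f
  id_comp _ := ElementaryEmbedding.ext fun _ => rfl
  comp_id _ := ElementaryEmbedding.ext fun _ => rfl
  assoc _ _ _ := ElementaryEmbedding.ext fun _ => rfl

/-- The setoid identifying isomorphic models of `T`. -/
def isoSetoid {L : FirstOrder.Language.{u, v}} (T : L.Theory) :
    Setoid (Theory.ModelType.{u, v, w} T) where
  r M N := Nonempty ((M : Type w) ≃[L] (N : Type w))
  iseqv := ⟨fun M => ⟨FirstOrder.Language.Equiv.refl L (M : Type w)⟩, fun ⟨e⟩ => ⟨e.symm⟩, fun ⟨e⟩ ⟨f⟩ => ⟨f.comp e⟩⟩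

/-- A single-sorted signature with no function symbols and countably many unary predicate
symbols `p₀, p₁, p₂, …`. -/
def countUnaryLang : FirstOrder.Language :=
  ⟨fun _ => Empty, fun n => match n with | 1 => ℕ | _ => Empty⟩

/-- The `i`-th unary predicate symbol. -/
def pS (i : ℕ) : countUnaryLang.Relations 1 := i

/-- The sentence `∃=1 x (x = x)`, i.e. `∃x ((x = x) ∧ ∀z ((z = z) → x = z))`. -/
def uniqueSent (L : FirstOrder.Language.{u, v}) : L.Sentence :=
  ∃' ((&0 =' &0) ⊓ ∀' ((&1 =' &1) ⟹ (&0 =' &1)))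

/-- The theory `T₁ = {∃=1 x (x = x)}`. -/
def T₁ : countUnaryLang.Theory := {uniqueSent countUnaryLang}

/-- The theory `T₂ = {∃=1 y (y = y)} ∪ {∀y (q₀(y) → q_i(y)) : i ∈ ℕ}`. -/
def T₂ : countUnaryLang.Theory :=
  {uniqueSent countUnaryLang} ∪
    Set.range fun i : ℕ => ∀' ((pS 0).boundedFormula₁ &0 ⟹ (pS i).boundedFormula₁ &0)

/-!
Every model of `T₂` has exactly one element, so there is at most one morphism between two
models, and an elementary embedding between one-point structures is an isomorphism: `Mod(T₂)`
is equivalent to the discrete category of its isomorphism classes. A one-point model is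
determined up to isomorphism by the set `S` of predicates true at its point, and the axioms
say exactly that `0 ∈ S` forces `S = ℕ`; the sets avoiding `0` already give `2^ℵ₀` classes.
-/

section ThinDiscrete

variable {C : Type*} [Category C] (s : Setoid C)
  (hs : ∀ X Y : C, Nonempty (X ⟶ Y) ↔ s X Y)

def toDiscreteQuotient : C ⥤ Discrete (Quotient s) where
  obj X := ⟨⟦X⟧⟩
  map f := eqToHom (congrArg Discrete.mk (Quotient.sound ((hs _ _).1 ⟨f⟩)))
  map_id _ := Subsingleton.elim _ _
  map_comp _ _ := Subsingleton.elim _ _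

instance [Quiver.IsThin C] : (toDiscreteQuotient s hs).Faithful :=
  ⟨fun {_ _} _ _ _ => Subsingleton.elim _ _⟩

noncomputable instance : (toDiscreteQuotient s hs).Full :=
  ⟨fun {X Y} f => ⟨((hs X Y).2 (Quotient.exact (Discrete.eq_of_hom f))).some,
    Subsingleton.elim _ _⟩⟩

instance : (toDiscreteQuotient s hs).EssSurj :=
  ⟨fun q => ⟨q.as.out, ⟨eqToIso (congrArg Discrete.mk q.as.out_eq)⟩⟩⟩

instance [Quiver.IsThin C] : (toDiscreteQuotient s hs).IsEquivalence := {}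

end ThinDiscrete

section OnePointModels

variable {L : FirstOrder.Language.{u, v}}

theorem subsingleton_of_realize_uniqueSent {M : Type w} [L.Structure M]
    (h : M ⊨ uniqueSent L) : Subsingleton M := by
  obtain ⟨x, hx⟩ : ∃ x : M, ∀ y, x = y := by
    simpa [uniqueSent, Sentence.Realize, Formula.Realize, Fin.snoc] using h
  exact ⟨fun a b => (hx a).symm.trans (hx b)⟩

noncomputable def ElementaryEmbedding.equivOfSubsingleton {M N : Type*} [L.Structure M]
    [L.Structure N] [Nonempty M] [Subsingleton N] (f : M ↪ₑ[L] N) : M ≃[L] N where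
  toEquiv := Equiv.ofBijective f ⟨f.injective, fun _ => ⟨Classical.arbitrary M,
    Subsingleton.elim _ _⟩⟩
  map_fun' := f.map_fun
  map_rel' := f.map_rel

variable {T : L.Theory} (hT : uniqueSent L ∈ T)
include hT

theorem subsingleton_of_uniqueSent_mem (M : Theory.ModelType.{u, v, w} T) : Subsingleton M :=
  subsingleton_of_realize_uniqueSent (Theory.realize_sentence_of_mem T hT)

theorem isThin_modelType_of_uniqueSent_mem : Quiver.IsThin (Theory.ModelType.{u, v, w} T) :=
  fun _ N =>
    have := subsingleton_of_uniqueSent_mem hT N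
    ⟨fun _ _ => ElementaryEmbedding.ext fun _ => Subsingleton.elim _ _⟩

theorem nonempty_hom_iff_isoSetoid_of_uniqueSent_mem (M N : Theory.ModelType.{u, v, w} T) :
    Nonempty (M ⟶ N) ↔ isoSetoid T M N := by
  have := subsingleton_of_uniqueSent_mem hT N
  exact ⟨fun ⟨f⟩ => ⟨ElementaryEmbedding.equivOfSubsingleton f⟩,
    fun ⟨e⟩ => ⟨e.toElementaryEmbedding⟩⟩

noncomputable def modelTypeEquivDiscrete :
    Theory.ModelType.{u, v, w} T ≌ Discrete (Quotient (isoSetoid T)) :=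
  have := isThin_modelType_of_uniqueSent_mem hT
  (toDiscreteQuotient _ (nonempty_hom_iff_isoSetoid_of_uniqueSent_mem hT)).asEquivalence

end OnePointModels

section PredicateSets

/-- The predicates holding at a chosen point: the complete isomorphism invariant of a
one-point structure. -/
def predSet (M : Type*) [countUnaryLang.Structure M] [Nonempty M] : Set ℕ :=
  {i | Structure.RelMap (pS i) fun _ => Classical.arbitrary M}

variable {M N : Type*} [countUnaryLang.Structure M] [countUnaryLang.Structure N]
  [Nonempty M] [Nonempty N]

theorem relMap_pS_iff_mem_predSet [Subsingleton M] (i : ℕ) (x : Fin 1 → M) :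
    Structure.RelMap (pS i) x ↔ i ∈ predSet M := by
  rw [Subsingleton.elim x fun _ => Classical.arbitrary M]
  rfl

theorem predSet_eq_of_equiv [Subsingleton N] (e : M ≃[countUnaryLang] N) :
    predSet M = predSet N := by
  ext i
  rw [← relMap_pS_iff_mem_predSet i (e ∘ fun _ => Classical.arbitrary M), e.map_rel]
  rfl

noncomputable def equivOfPredSetEq [Subsingleton M] [Subsingleton N]
    (h : predSet M = predSet N) : M ≃[countUnaryLang] N where
  toEquiv := equivOfSubsingletonOfSubsingleton (fun _ => Classical.arbitrary N)
    (fun _ => Classical.arbitrary M)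
  map_fun' f := f.elim
  map_rel' {n} r x := by
    match n, r with
    | 1, (i : ℕ) =>
      exact ((relMap_pS_iff_mem_predSet i _).trans (by rw [h])).trans
        (relMap_pS_iff_mem_predSet i x).symm

end PredicateSets

section ModelsOfT₂

theorem uniqueSent_mem_T₂ : uniqueSent countUnaryLang ∈ T₂ := Set.mem_union_left _ rfl

theorem isoSetoid_T₂_iff_predSet_eq (M N : Theory.ModelType.{0, 0, w} T₂) :
    isoSetoid T₂ M N ↔ predSet M = predSet N :=
  have := subsingleton_of_uniqueSent_mem uniqueSent_mem_T₂ M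
  have := subsingleton_of_uniqueSent_mem uniqueSent_mem_T₂ N
  ⟨fun ⟨e⟩ => predSet_eq_of_equiv e, fun h => ⟨equivOfPredSetEq h⟩⟩

theorem predSet_eq_univ_of_zero_mem (M : Theory.ModelType.{0, 0, w} T₂)
    (h0 : 0 ∈ predSet M) : predSet M = Set.univ := by
  have := subsingleton_of_uniqueSent_mem uniqueSent_mem_T₂ M
  refine Set.eq_univ_of_forall fun i => ?_
  have hi : M ⊨ ∀' ((pS 0).boundedFormula₁ &0 ⟹ (pS i).boundedFormula₁ &0) :=
    Theory.realize_sentence_of_mem T₂ (Set.mem_union_right _ ⟨i, rfl⟩)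
  simp only [Sentence.Realize, Formula.Realize, BoundedFormula.realize_all,
    BoundedFormula.realize_imp, BoundedFormula.realize_rel₁, relMap_pS_iff_mem_predSet] at hi
  exact hi (Classical.arbitrary M) h0

abbrev unitStructure (S : Set ℕ) : countUnaryLang.Structure PUnit.{w + 1} where
  funMap f := f.elim
  RelMap {n} r _ := match n, r with
    | 1, (i : ℕ) => i ∈ S

theorem unitStructure_model {S : Set ℕ} (hS : 0 ∈ S → S = Set.univ) :
    @Theory.Model _ PUnit.{w + 1} (unitStructure S) T₂ := by
  let _ := unitStructure.{w} S
  refine ⟨fun φ hφ => ?_⟩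
  rcases hφ with rfl | ⟨i, rfl⟩
  · simp [uniqueSent, Sentence.Realize, Formula.Realize]
  · simp only [Sentence.Realize, Formula.Realize, BoundedFormula.realize_all,
      BoundedFormula.realize_imp, BoundedFormula.realize_rel₁]
    intro _ h0
    exact (hS h0).symm ▸ Set.mem_univ i

def unitModel (S : Set ℕ) (hS : 0 ∈ S → S = Set.univ) : Theory.ModelType.{0, 0, w} T₂ :=
  @Theory.ModelType.mk _ T₂ PUnit (unitStructure S) (unitStructure_model hS) ⟨⟨⟩⟩

noncomputable def isoClassesEquiv :
    Quotient (isoSetoid.{0, 0, w} T₂) ≃ {S : Set ℕ // 0 ∈ S → S = Set.univ} where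
  toFun := Quotient.lift (fun M => ⟨predSet M, predSet_eq_univ_of_zero_mem M⟩)
    fun M N h => Subtype.ext ((isoSetoid_T₂_iff_predSet_eq M N).1 h)
  invFun S := ⟦unitModel S.1 S.2⟧
  left_inv := Quotient.ind fun _ => Quotient.sound ((isoSetoid_T₂_iff_predSet_eq _ _).2 rfl)
  right_inv _ := rfl

end ModelsOfT₂

theorem mk_subtype_zero_mem_imp_eq_univ :
    Cardinal.mk {S : Set ℕ // 0 ∈ S → S = Set.univ} = 2 ^ Cardinal.aleph0 := by
  refine le_antisymm ?_ ?_
  · simpa using Cardinal.mk_subtype_le fun S : Set ℕ => 0 ∈ S → S = Set.univ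
  · have hinj : Function.Injective fun S : Set ℕ =>
        (⟨Nat.succ '' S, fun h => absurd h (by simp)⟩ :
          {S : Set ℕ // 0 ∈ S → S = Set.univ}) :=
      fun _ _ h => Set.image_injective.2 Nat.succ_injective (congrArg Subtype.val h)
    simpa using Cardinal.mk_le_of_injective hinj

/-- The category `Mod(T₂)` of models of
`T₂ = {∃=1 y (y = y)} ∪ {∀y (q₀(y) → q_i(y)) : i ∈ ℕ}` (with elementary embeddings) is
discrete and has `2^ℵ₀` isomorphism classes of objects. -/
theorem modelCat_T₂_discrete_card :
    (∃ ι : Type*, Nonempty (Theory.ModelType.{0, 0, 0} T₂ ≌ Discrete ι)) ∧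
    Cardinal.mk (Quotient (isoSetoid.{0, 0, 0} T₂)) = 2 ^ Cardinal.aleph0 := by
  refine ⟨⟨ULift _, ⟨(modelTypeEquivDiscrete uniqueSent_mem_T₂).trans
    (Discrete.equivalence (isoClassesEquiv.trans Equiv.ulift.symm))⟩⟩, ?_⟩
  simpa [mk_subtype_zero_mem_imp_eq_univ] using Cardinal.lift_mk_eq'.2 ⟨isoClassesEquiv.{0}⟩

end MoritaPaper
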